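/- Let k ≥ 1, let m : ℝ → ℝ^(2k) be the moment curve m(t) = (t, t², …, t^(2k)), and let I be any (k+1)-element subset of {1, 2, …, 2k+3}. Then the number of points in the intersection of conv(m(I)) with the boundary of the simplex conv(m({1,…,2k+3} \ I)) (the union of the convex hulls of the images of the (k+1)-element subsets of {1,…,2k+3} \ I) equals the number of (k+1)-element subsets J of {1, …, 2k+3} \ I that alternate with I. -/

import Mathlib

open scoped Classical

/-- The moment curve `t ↦ (t, t², …, t^d)` in `ℝ^d`. -/
def moment (d : ℕ) : ℝ → (Fin d → ℝ) := fun t i => t ^ ((i : ℕ) + 1)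

/-- Two finite subsets `P = {s₁ < s₂ < … < s_p}` and `Q = {t₁ < t₂ < … < t_p}` of a
linear order alternate if either `s₁ < t₁ < s₂ < t₂ < … < s_p < t_p` or
`t₁ < s₁ < t₂ < s₂ < … < t_p < s_p`. -/
def Alternates {α : Type*} [LinearOrder α] (P Q : Finset α) : Prop :=
  ∃ (p : ℕ) (f g : Fin p → α), StrictMono f ∧ StrictMono g ∧
    Set.range f = (P : Set α) ∧ Set.range g = (Q : Set α) ∧
    (((∀ i : Fin p, f i < g i) ∧ ∀ i j : Fin p, (i : ℕ) + 1 = (j : ℕ) → g i < f j) ∨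
      ((∀ i : Fin p, g i < f i) ∧ ∀ i j : Fin p, (i : ℕ) + 1 = (j : ℕ) → f i < g j))

/-!
On the moment curve, `d + 2` points `m(s)`, `s ∈ U`, carry (up to scaling) exactly one affine
dependence `c`, and its signs alternate along `U`: pairing `c` with the degree-`d` polynomial
vanishing at all nodes except two consecutive ones `a < b` gives `c a P(a) + c b P(b) = 0` with
`P(a) P(b) > 0`. So for a partition `U = A ⊔ B` the hulls `conv m(A)` and `conv m(B)` meet in at
most one point, and only if `A` and `B` alternate; conversely Radon's theorem yields some
partition whose hulls meet, and it must be the alternating one. Finally, if a point of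
`conv m(I)` lies in `conv m(J)` and `conv m(J')` with `J, J'` in the `(k + 2)`-element complement
of `I`, its weights on `J` and on `J'` are all positive and, as `|J ∪ J'| ≤ 2k + 1`, they agree
(Vandermonde); hence `J = J'`, and the intersection is a disjoint union of one point for each
alternating `J`.
-/

open Finset Polynomial

theorem Set.ncard_biUnion_of_subsingleton {ι β : Type*} (P : Finset ι) {T : ι → Set β}
    (hT : ∀ i ∈ P, (T i).Subsingleton) (hdisj : (P : Set ι).PairwiseDisjoint T) :
    (⋃ i ∈ P, T i).ncard = #{i ∈ P | (T i).Nonempty} := by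
  rw [← set_biUnion_coe, P.finite_toSet.ncard_biUnion (fun i hi => (hT i hi).finite) hdisj,
    finsum_mem_coe_finset, card_filter]
  refine sum_congr rfl fun i hi => ?_
  rcases (hT i hi).eq_empty_or_singleton with h | ⟨x, h⟩ <;> simp [h]

theorem Fin.strictMono_of_lt_of_val_add_one_eq {α : Type*} [Preorder α] {n : ℕ}
    {f : Fin n → α} (h : ∀ i j : Fin n, (i : ℕ) + 1 = j → f i < f j) : StrictMono f := by
  cases n with
  | zero => exact fun i => i.elim0
  | succ n => exact Fin.strictMono_iff_lt_succ.2 fun i => h _ _ rfl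

theorem Fin.forall_or_forall_not_of_iff_succ {n : ℕ} {P : Fin n → Prop}
    (h : ∀ i j : Fin n, (i : ℕ) + 1 = j → (P i ↔ P j)) : (∀ i, P i) ∨ ∀ i, ¬P i := by
  have hiff : ∀ i : Fin n, P i ↔ P ⟨0, i.pos⟩ := by
    rintro ⟨m, hm⟩
    induction m with
    | zero => rfl
    | succ m ih => exact (h ⟨m, by omega⟩ ⟨m + 1, hm⟩ rfl).symm.trans (ih (by omega))
  by_cases hex : ∃ i, P i
  · obtain ⟨i, hi⟩ := hex
    exact Or.inl fun j => (hiff j).2 ((hiff i).1 hi)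
  · exact Or.inr (not_exists.1 hex)

section Alternation

variable {α : Type*} [LinearOrder α]

theorem Finset.exists_orderEmbOfFin_eq {U : Finset α} {s : α} (hs : s ∈ U) :
    ∃ i, U.orderEmbOfFin rfl i = s := by
  rwa [← Set.mem_range, U.range_orderEmbOfFin rfl]

theorem Finset.forall_or_forall_not_of_iff_succ (U : Finset α) {P : α → Prop}
    (h : ∀ i j : Fin U.card, (i : ℕ) + 1 = j →
      (P (U.orderEmbOfFin rfl i) ↔ P (U.orderEmbOfFin rfl j))) :
    (∀ s ∈ U, P s) ∨ ∀ s ∈ U, ¬P s := by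
  refine (Fin.forall_or_forall_not_of_iff_succ h).imp (fun hP s hs => ?_) (fun hP s hs => ?_)
  · obtain ⟨i, rfl⟩ := exists_orderEmbOfFin_eq hs
    exact hP i
  · obtain ⟨i, rfl⟩ := exists_orderEmbOfFin_eq hs
    exact hP i

def AlternatesIn (U A : Finset α) : Prop :=
  ∀ i j : Fin U.card, (i : ℕ) + 1 = j →
    (U.orderEmbOfFin rfl i ∈ A ↔ U.orderEmbOfFin rfl j ∉ A)

theorem AlternatesIn.eq_or_eq_sdiff {U A A' : Finset α} (h : AlternatesIn U A)
    (h' : AlternatesIn U A') (hA : A ⊆ U) (hA' : A' ⊆ U) : A = A' ∨ A = U \ A' := by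
  refine (U.forall_or_forall_not_of_iff_succ (P := fun s => s ∈ A ↔ s ∈ A')
    fun i j hij => by have := h i j hij; have := h' i j hij; tauto).imp
    (fun hP => ?_) (fun hP => ?_)
  · ext s
    exact ⟨fun hs => (hP s (hA hs)).1 hs, fun hs => (hP s (hA' hs)).2 hs⟩
  · ext s
    simp only [mem_sdiff]
    exact ⟨fun hs => ⟨hA hs, fun hs' => hP s (hA hs) (iff_of_true hs hs')⟩,
      fun ⟨hs, hs'⟩ => by have := hP s hs; tauto⟩

theorem Alternates.symm {A B : Finset α} (h : Alternates A B) : Alternates B A := by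
  obtain ⟨p, f, g, hf, hg, hrf, hrg, hfg⟩ := h
  exact ⟨p, g, f, hg, hf, hrg, hrf, hfg.symm⟩

theorem alternatesIn_iff_forall_mem_iff_even {U A : Finset α} : AlternatesIn U A ↔
    (∀ i : Fin U.card, U.orderEmbOfFin rfl i ∈ A ↔ Even (i : ℕ)) ∨
      ∀ i : Fin U.card, U.orderEmbOfFin rfl i ∈ A ↔ ¬Even (i : ℕ) := by
  have hpar : ∀ i j : Fin U.card, (i : ℕ) + 1 = j → (Even (j : ℕ) ↔ ¬Even (i : ℕ)) :=
    fun i j hij => by rw [← hij, Nat.even_add_one]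
  constructor
  · intro h
    refine (Fin.forall_or_forall_not_of_iff_succ (P := fun i => _ ∈ A ↔ Even (i : ℕ))
      fun i j hij => ?_).imp id fun hP i => by have := hP i; tauto
    have := h i j hij
    have := hpar i j hij
    tauto
  · rintro (h | h) i j hij <;>
    · have := h i
      have := h j
      have := hpar i j hij
      tauto

theorem alternates_of_forall_mem_iff_even {U A B : Finset α} (hU : A ∪ B = U)
    (hAB : Disjoint A B) {p : ℕ} (hp : U.card = 2 * p)
    (h : ∀ i : Fin U.card, U.orderEmbOfFin rfl i ∈ A ↔ Even (i : ℕ)) : Alternates A B := by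
  set e := U.orderEmbOfFin rfl
  have hB : ∀ i, e i ∈ B ↔ ¬Even (i : ℕ) := fun i => by
    have hi : e i ∈ A ∪ B := by rw [hU]; exact U.orderEmbOfFin_mem rfl i
    rw [← h i]
    exact ⟨fun hB => disjoint_right.1 hAB hB, fun hA => (mem_union.1 hi).resolve_left hA⟩
  refine ⟨p, fun i => e ⟨2 * i, by omega⟩, fun i => e ⟨2 * i + 1, by omega⟩,
    fun i i' hii' => e.strictMono (Fin.mk_lt_mk.2 (by rw [Fin.lt_def] at hii'; omega)),
    fun i i' hii' => e.strictMono (Fin.mk_lt_mk.2 (by rw [Fin.lt_def] at hii'; omega)), ?_, ?_,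
    Or.inl ⟨fun i => e.strictMono (Fin.mk_lt_mk.2 (by omega)),
      fun i j hij => e.strictMono (Fin.mk_lt_mk.2 (by omega))⟩⟩
  · ext s
    refine ⟨?_, fun hs => ?_⟩
    · rintro ⟨i, rfl⟩
      exact (h _).2 (even_two_mul _)
    · obtain ⟨j, rfl⟩ := exists_orderEmbOfFin_eq (hU ▸ mem_union_left _ hs)
      obtain ⟨m, hm⟩ := (h j).1 hs
      exact ⟨⟨m, by omega⟩, congrArg e (Fin.ext (by simp; omega))⟩
  · ext s
    refine ⟨?_, fun hs => ?_⟩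
    · rintro ⟨i, rfl⟩
      exact (hB _).2 (by simp)
    · obtain ⟨j, rfl⟩ := exists_orderEmbOfFin_eq (hU ▸ mem_union_right _ hs)
      obtain ⟨m, hm⟩ := Nat.not_even_iff_odd.1 ((hB j).1 hs)
      exact ⟨⟨m, by omega⟩, congrArg e (Fin.ext (by simp; omega))⟩

theorem forall_mem_iff_even_of_interleave {U A B : Finset α} (hU : A ∪ B = U)
    (hAB : Disjoint A B) {p : ℕ} {f g : Fin p → α} (hf : StrictMono f) (hg : StrictMono g)
    (hrf : Set.range f = A) (hrg : Set.range g = B) (hfg : ∀ i, f i < g i)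
    (hgf : ∀ i j : Fin p, (i : ℕ) + 1 = j → g i < f j) :
    ∀ i : Fin U.card, U.orderEmbOfFin rfl i ∈ A ↔ Even (i : ℕ) := by
  have hcard : ∀ {C : Finset α} {f : Fin p → α}, StrictMono f → Set.range f = C →
      C.card = p := fun hf hrf => by
    rw [← Set.ncard_coe_finset, ← hrf, Set.ncard_range_of_injective hf.injective, Nat.card_fin]
  have hUp : U.card = 2 * p := by
    rw [← hU, card_union_of_disjoint hAB, hcard hf hrf, hcard hg hrg, two_mul]
  set h : Fin U.card → α := fun i =>
    if Even (i : ℕ) then f ⟨i / 2, by omega⟩ else g ⟨i / 2, by omega⟩ with hh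
  have hfA : ∀ i, f i ∈ A := fun i => by rw [← mem_coe, ← hrf]; exact ⟨i, rfl⟩
  have hgB : ∀ i, g i ∈ B := fun i => by rw [← mem_coe, ← hrg]; exact ⟨i, rfl⟩
  have hmono : StrictMono h := Fin.strictMono_of_lt_of_val_add_one_eq fun i j hij => by
    rcases Nat.even_or_odd (i : ℕ) with hi | hi
    · have hj : ¬Even (j : ℕ) := by rw [← hij, Nat.even_add_one]; exact not_not.2 hi
      simp only [hh, if_pos hi, if_neg hj]
      convert hfg _ using 3
      obtain ⟨m, hm⟩ := hi
      omega
    · have hj : Even (j : ℕ) := by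
        rw [← hij, Nat.even_add_one]; exact Nat.not_even_iff_odd.2 hi
      simp only [hh, if_neg (Nat.not_even_iff_odd.2 hi), if_pos hj]
      refine hgf _ _ ?_
      obtain ⟨m, hm⟩ := hi
      simp only
      omega
  have hmem : ∀ i, h i ∈ U := fun i => by
    rw [← hU]
    by_cases hi : Even (i : ℕ)
    · simp only [hh, if_pos hi]; exact mem_union_left _ (hfA _)
    · simp only [hh, if_neg hi]; exact mem_union_right _ (hgB _)
  intro i
  rw [← Finset.orderEmbOfFin_unique rfl hmem hmono]
  by_cases hi : Even (i : ℕ)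
  · simp only [hh, if_pos hi, hfA, hi]
  · simp only [hh, if_neg hi, hi, iff_false]
    exact disjoint_right.1 hAB (hgB _)

theorem alternates_iff_alternatesIn {A B : Finset α} (hAB : Disjoint A B)
    (hcard : A.card = B.card) : Alternates A B ↔ AlternatesIn (A ∪ B) A := by
  have hB : ∀ i : Fin (A ∪ B).card, (A ∪ B).orderEmbOfFin rfl i ∈ B ↔
      (A ∪ B).orderEmbOfFin rfl i ∉ A := fun i => by
    have := (A ∪ B).orderEmbOfFin_mem rfl i
    rw [mem_union] at this
    exact ⟨fun hB => disjoint_right.1 hAB hB, fun hA => this.resolve_left hA⟩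
  rw [alternatesIn_iff_forall_mem_iff_even]
  constructor
  · rintro ⟨p, f, g, hf, hg, hrf, hrg, ⟨hfg, hgf⟩ | ⟨hgf, hfg⟩⟩
    · exact Or.inl (forall_mem_iff_even_of_interleave rfl hAB hf hg hrf hrg hfg hgf)
    · refine Or.inr fun i => ?_
      rw [← forall_mem_iff_even_of_interleave (union_comm B A) hAB.symm hg hf hrg hrf hgf hfg i,
        hB, not_not]
  · have hp : (A ∪ B).card = 2 * A.card := by rw [card_union_of_disjoint hAB, hcard, two_mul]
    rintro (h | h)
    · exact alternates_of_forall_mem_iff_even rfl hAB hp h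
    · refine (alternates_of_forall_mem_iff_even (union_comm B A) hAB.symm hp fun i => ?_).symm
      rw [hB, h, not_not]

end Alternation

theorem Lagrange.eval_nodal_mul_eval_nodal_pos {α : Type*} [LinearOrder α] {v : α → ℝ}
    (hv : StrictMono v) {V : Finset α} {a b : α} (hab : a < b)
    (hV : ∀ t ∈ V, t < a ∨ b < t) :
    0 < (Lagrange.nodal V v).eval (v a) * (Lagrange.nodal V v).eval (v b) := by
  rw [Lagrange.eval_nodal, Lagrange.eval_nodal, ← prod_mul_distrib]
  refine prod_pos fun t ht => ?_
  have hab := hv hab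
  rcases hV t ht with ht | ht
  · have := hv ht
    exact mul_pos (by linarith) (by linarith)
  · have := hv ht
    exact mul_pos_of_neg_of_neg (by linarith) (by linarith)

section MomentDependence

variable {α : Type*}

-- `c` is an affine dependence of the points `moment d (v s)`, `s ∈ U`: the equation for `j = 0`
-- says that `∑ c s = 0`, those for `1 ≤ j ≤ d` that `∑ c s • moment d (v s) = 0`.
def IsMomentDependence (d : ℕ) (v : α → ℝ) (U : Finset α) (c : α → ℝ) : Prop :=
  ∀ j ≤ d, ∑ s ∈ U, c s * v s ^ j = 0

namespace IsMomentDependence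

variable {d : ℕ} {v : α → ℝ} {U : Finset α} {c c' : α → ℝ}

theorem sub (hc : IsMomentDependence d v U c) (hc' : IsMomentDependence d v U c') :
    IsMomentDependence d v U (c - c') := fun j hj => by
  simp only [Pi.sub_apply, sub_mul, sum_sub_distrib, hc j hj, hc' j hj, sub_zero]

theorem smul (hc : IsMomentDependence d v U c) (r : ℝ) : IsMomentDependence d v U (r • c) :=
  fun j hj => by simp only [Pi.smul_apply, smul_eq_mul, mul_assoc, ← mul_sum, hc j hj, mul_zero]

theorem sum_mul_eval_eq_zero (hc : IsMomentDependence d v U c) {P : ℝ[X]}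
    (hP : P.natDegree ≤ d) : ∑ s ∈ U, c s * P.eval (v s) = 0 := by
  simp_rw [eval_eq_sum_range' (Nat.lt_succ_of_le hP), mul_sum, mul_left_comm (c _)]
  rw [sum_comm]
  refine sum_eq_zero fun j hj => ?_
  rw [← mul_sum, hc j (Nat.lt_succ_iff.1 (mem_range.1 hj)), mul_zero]

theorem eq_zero_of_card_le (hv : Function.Injective v) (hc : IsMomentDependence d v U c)
    (hU : U.card ≤ d + 1) {s : α} (hs : s ∈ U) : c s = 0 := by
  have hP := hc.sum_mul_eval_eq_zero (P := Lagrange.nodal (U.erase s) v)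
    (by rw [Lagrange.natDegree_nodal, card_erase_of_mem hs]; omega)
  rw [sum_eq_single s (fun t ht hts => by
    rw [Lagrange.eval_nodal_at_node (mem_erase.2 ⟨hts, ht⟩), mul_zero]) (absurd hs)] at hP
  exact (mul_eq_zero.1 hP).resolve_right
    (Lagrange.eval_nodal_not_at_node fun t ht => (hv.ne (mem_erase.1 ht).1).symm)

variable [LinearOrder α]

theorem exists_pos_eq_neg_mul (hv : StrictMono v) (hc : IsMomentDependence d v U c)
    (hU : U.card = d + 2) {i j : Fin U.card} (hij : (i : ℕ) + 1 = j) :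
    ∃ r, 0 < r ∧ c (U.orderEmbOfFin rfl i) = -(r * c (U.orderEmbOfFin rfl j)) := by
  set e := U.orderEmbOfFin rfl
  have hab : e i < e j := e.strictMono (Fin.lt_def.2 (by omega))
  have ha : e i ∈ U := U.orderEmbOfFin_mem rfl i
  have hb : e j ∈ U.erase (e i) := mem_erase.2 ⟨hab.ne', U.orderEmbOfFin_mem rfl j⟩
  set V := (U.erase (e i)).erase (e j)
  have hsum := hc.sum_mul_eval_eq_zero (P := Lagrange.nodal V v)
    (by rw [Lagrange.natDegree_nodal, card_erase_of_mem hb, card_erase_of_mem ha]; omega)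
  rw [← add_sum_erase _ _ ha, ← add_sum_erase _ _ hb, sum_eq_zero fun t ht => by
    rw [Lagrange.eval_nodal_at_node ht, mul_zero], add_zero] at hsum
  have hpos := Lagrange.eval_nodal_mul_eval_nodal_pos (V := V) hv hab fun t ht => by
    obtain ⟨htb, hta, htU⟩ : t ≠ e j ∧ t ≠ e i ∧ t ∈ U := by simpa [V] using ht
    obtain ⟨l, rfl⟩ := exists_orderEmbOfFin_eq htU
    have := Fin.val_ne_of_ne (ne_of_apply_ne e hta)
    have := Fin.val_ne_of_ne (ne_of_apply_ne e htb)
    exact (lt_or_gt_of_ne this).imp (fun hl => e.strictMono (Fin.lt_def.2 (by omega)))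
      fun hl => e.strictMono (Fin.lt_def.2 (by omega))
  have hne : (Lagrange.nodal V v).eval (v (e i)) ≠ 0 := left_ne_zero_of_mul hpos.ne'
  refine ⟨(Lagrange.nodal V v).eval (v (e j)) / (Lagrange.nodal V v).eval (v (e i)),
    div_pos_iff.2 ((mul_pos_iff.1 hpos).imp And.symm And.symm), ?_⟩
  field_simp
  linear_combination hsum

theorem eq_zero_of_apply_eq_zero (hv : StrictMono v) (hc : IsMomentDependence d v U c)
    (hU : U.card = d + 2) {s₀ : α} (hs₀ : s₀ ∈ U) (h₀ : c s₀ = 0) {s : α}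
    (hs : s ∈ U) : c s = 0 := by
  refine ((U.forall_or_forall_not_of_iff_succ (P := fun s => c s = 0) fun i j hij => ?_)
    |>.resolve_right fun h => h s₀ hs₀ h₀) s hs
  obtain ⟨r, hr, h⟩ := hc.exists_pos_eq_neg_mul hv hU hij
  simp [h, hr.ne']

theorem eq_div_mul (hv : StrictMono v) (hc : IsMomentDependence d v U c)
    (hc' : IsMomentDependence d v U c') (hU : U.card = d + 2) {s₀ : α} (hs₀ : s₀ ∈ U)
    (h₀ : c s₀ ≠ 0) {s : α} (hs : s ∈ U) : c' s = c' s₀ / c s₀ * c s := by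
  have := (hc'.sub (hc.smul (c' s₀ / c s₀))).eq_zero_of_apply_eq_zero hv hU hs₀
    (by simp [div_mul_cancel₀ _ h₀]) hs
  simpa [sub_eq_zero] using this

theorem alternatesIn (hv : StrictMono v) (hc : IsMomentDependence d v U c) (hU : U.card = d + 2)
    (hne : ∀ s ∈ U, c s ≠ 0) {A : Finset α} (hA : ∀ s ∈ U, s ∈ A ↔ 0 < c s) :
    AlternatesIn U A := fun i j hij => by
  obtain ⟨r, hr, h⟩ := hc.exists_pos_eq_neg_mul hv hU hij
  have hj := hne _ (U.orderEmbOfFin_mem rfl j)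
  rw [hA _ (U.orderEmbOfFin_mem rfl i), hA _ (U.orderEmbOfFin_mem rfl j), h, neg_pos]
  exact ⟨fun h' hj' => (mul_pos hr hj').not_gt h',
    fun hj' => mul_neg_of_pos_of_neg hr ((not_lt.1 hj').lt_of_ne hj)⟩

end IsMomentDependence

end MomentDependence

section ConvexCombination

variable {α E : Type*} [AddCommGroup E] [Module ℝ E]

structure IsConvexCombination (A : Finset α) (φ : α → E) (w : α → ℝ) (x : E) : Prop where
  nonneg : ∀ s, 0 ≤ w s
  eq_zero_of_notMem : ∀ s ∉ A, w s = 0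
  sum_eq_one : ∑ s ∈ A, w s = 1
  sum_smul_eq : ∑ s ∈ A, w s • φ s = x

theorem IsConvexCombination.exists_of_mem_convexHull {φ : α → E} (hφ : Function.Injective φ)
    {A : Finset α} {x : E} (hx : x ∈ convexHull ℝ (φ '' A)) :
    ∃ w, IsConvexCombination A φ w x := by
  rw [← coe_image, Finset.mem_convexHull'] at hx
  obtain ⟨w, hw₀, hw₁, hwx⟩ := hx
  refine ⟨fun s => if s ∈ A then w (φ s) else 0, fun s => ?_, fun s hs => if_neg hs, ?_, ?_⟩
  · split_ifs with hs
    exacts [hw₀ _ (mem_image_of_mem φ hs), le_rfl]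
  · rw [← hw₁, sum_image hφ.injOn]
    exact sum_congr rfl fun s hs => if_pos hs
  · rw [← hwx, sum_image hφ.injOn]
    exact sum_congr rfl fun s hs => by rw [if_pos hs]

variable {d : ℕ} {v : α → ℝ} {A B U : Finset α} {a b : α → ℝ} {x : Fin d → ℝ}

theorem IsConvexCombination.sum_mul_pow_succ (ha : IsConvexCombination A (moment d ∘ v) a x)
    (j : Fin d) : ∑ s ∈ A, a s * v s ^ ((j : ℕ) + 1) = x j := by
  rw [← ha.sum_smul_eq, Finset.sum_apply]
  rfl

theorem IsConvexCombination.isMomentDependence_sub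
    (ha : IsConvexCombination A (moment d ∘ v) a x)
    (hb : IsConvexCombination B (moment d ∘ v) b x) (hAU : A ⊆ U) (hBU : B ⊆ U) :
    IsMomentDependence d v U (a - b) := fun j hj => by
  have hsum : ∀ {C w}, IsConvexCombination C (moment d ∘ v) w x → C ⊆ U →
      ∑ s ∈ U, w s * v s ^ j = ∑ s ∈ C, w s * v s ^ j := fun hw hC =>
    (sum_subset hC fun s _ hs => by rw [hw.eq_zero_of_notMem s hs, zero_mul]).symm
  simp only [Pi.sub_apply, sub_mul]
  rw [sum_sub_distrib, hsum ha hAU, hsum hb hBU, sub_eq_zero]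
  rcases j with _ | j
  · simp [ha.sum_eq_one, hb.sum_eq_one]
  · exact (ha.sum_mul_pow_succ ⟨j, by omega⟩).trans
      (hb.sum_mul_pow_succ ⟨j, by omega⟩).symm

end ConvexCombination

section PartitionWeights

variable {α : Type*} [LinearOrder α] {d : ℕ} {v : α → ℝ} {U A B : Finset α}
  {a b : α → ℝ} {x : Fin d → ℝ}

namespace IsConvexCombination

theorem sub_ne_zero (hv : StrictMono v) (hAB : Disjoint A B) (hABU : A ∪ B = U)
    (hU : U.card = d + 2) (ha : IsConvexCombination A (moment d ∘ v) a x)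
    (hb : IsConvexCombination B (moment d ∘ v) b x) {s : α} (hs : s ∈ U) :
    a s - b s ≠ 0 := by
  intro h
  have hdep := ha.isMomentDependence_sub hb (hABU ▸ subset_union_left)
    (hABU ▸ subset_union_right)
  have hzero : ∀ t ∈ A, a t = 0 := fun t ht => by
    have := hdep.eq_zero_of_apply_eq_zero hv hU hs h (hABU ▸ mem_union_left _ ht)
    rwa [Pi.sub_apply, hb.eq_zero_of_notMem t (disjoint_left.1 hAB ht), sub_zero] at this
  exact zero_ne_one ((sum_eq_zero hzero).symm.trans ha.sum_eq_one)

theorem pos_of_mem_right (hv : StrictMono v) (hAB : Disjoint A B) (hABU : A ∪ B = U)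
    (hU : U.card = d + 2) (ha : IsConvexCombination A (moment d ∘ v) a x)
    (hb : IsConvexCombination B (moment d ∘ v) b x) {s : α} (hs : s ∈ B) : 0 < b s := by
  have := sub_ne_zero hv hAB hABU hU ha hb (hABU ▸ mem_union_right _ hs)
  rw [ha.eq_zero_of_notMem s (disjoint_right.1 hAB hs), zero_sub, neg_ne_zero] at this
  exact (hb.nonneg s).lt_of_ne' this

theorem alternatesIn (hv : StrictMono v) (hAB : Disjoint A B) (hABU : A ∪ B = U)
    (hU : U.card = d + 2) (ha : IsConvexCombination A (moment d ∘ v) a x)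
    (hb : IsConvexCombination B (moment d ∘ v) b x) : AlternatesIn U A := by
  refine (ha.isMomentDependence_sub hb (hABU ▸ subset_union_left)
    (hABU ▸ subset_union_right)).alternatesIn hv hU
    (fun s hs => sub_ne_zero hv hAB hABU hU ha hb hs) fun s hs => ?_
  rcases mem_union.1 (hABU ▸ hs) with hsA | hsB
  · rw [Pi.sub_apply, hb.eq_zero_of_notMem s (disjoint_left.1 hAB hsA), sub_zero]
    exact iff_of_true hsA (pos_of_mem_right hv hAB.symm ((union_comm B A).trans hABU) hU hb ha hsA)
  · rw [Pi.sub_apply, ha.eq_zero_of_notMem s (disjoint_right.1 hAB hsB), zero_sub, neg_pos]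
    exact iff_of_false (disjoint_right.1 hAB hsB) (hb.nonneg s).not_gt

theorem point_eq {a' b' : α → ℝ} {y : Fin d → ℝ} (hv : StrictMono v) (hAB : Disjoint A B)
    (hABU : A ∪ B = U) (hU : U.card = d + 2) (ha : IsConvexCombination A (moment d ∘ v) a x)
    (hb : IsConvexCombination B (moment d ∘ v) b x)
    (ha' : IsConvexCombination A (moment d ∘ v) a' y)
    (hb' : IsConvexCombination B (moment d ∘ v) b' y) : x = y := by
  have hAU : A ⊆ U := hABU ▸ subset_union_left
  have hBU : B ⊆ U := hABU ▸ subset_union_right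
  obtain ⟨s₀, hs₀⟩ : A.Nonempty := nonempty_of_sum_ne_zero (ha.sum_eq_one ▸ one_ne_zero)
  obtain ⟨r, hr⟩ : ∃ r, ∀ s ∈ A, a' s = r * a s := ⟨_, fun s hs => by
    have := (ha.isMomentDependence_sub hb hAU hBU).eq_div_mul hv
      (ha'.isMomentDependence_sub hb' hAU hBU) hU (hAU hs₀)
      (sub_ne_zero hv hAB hABU hU ha hb (hAU hs₀)) (hAU hs)
    simpa [hb.eq_zero_of_notMem s (disjoint_left.1 hAB hs),
      hb'.eq_zero_of_notMem s (disjoint_left.1 hAB hs)] using this⟩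
  have hr₁ : r = 1 := by
    simpa [sum_congr rfl hr, ← mul_sum, ha.sum_eq_one] using ha'.sum_eq_one
  rw [← ha.sum_smul_eq, ← ha'.sum_smul_eq]
  exact sum_congr rfl fun s hs => by rw [hr s hs, hr₁, one_mul]

theorem subset_of_card_union_le {B' : Finset α} {b' : α → ℝ} (hv : StrictMono v)
    (hAB : Disjoint A B) (hABU : A ∪ B = U) (hU : U.card = d + 2)
    (hBB' : (B ∪ B').card ≤ d + 1) (ha : IsConvexCombination A (moment d ∘ v) a x)
    (hb : IsConvexCombination B (moment d ∘ v) b x)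
    (hb' : IsConvexCombination B' (moment d ∘ v) b' x) : B ⊆ B' := by
  intro s hs
  by_contra hs'
  have := (hb.isMomentDependence_sub hb' subset_union_left subset_union_right).eq_zero_of_card_le
    hv.injective hBB' (mem_union_left _ hs)
  rw [Pi.sub_apply, hb'.eq_zero_of_notMem s hs', sub_zero] at this
  exact (pos_of_mem_right hv hAB hABU hU ha hb hs).ne' this

end IsConvexCombination

end PartitionWeights

theorem moment_injective {d : ℕ} (hd : 0 < d) : Function.Injective (moment d) := fun s t h => by
  simpa [moment] using congrFun h ⟨0, hd⟩

section HullIntersection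

variable {α : Type*} [LinearOrder α] {d : ℕ} {v : α → ℝ} {U A B : Finset α}

theorem alternatesIn_of_mem_convexHull_inter (hd : 0 < d) (hv : StrictMono v)
    (hAB : Disjoint A B) (hABU : A ∪ B = U) (hU : U.card = d + 2) {x : Fin d → ℝ}
    (hxA : x ∈ convexHull ℝ (moment d ∘ v '' A))
    (hxB : x ∈ convexHull ℝ (moment d ∘ v '' B)) :
    AlternatesIn U A := by
  have hφ := (moment_injective hd).comp hv.injective
  obtain ⟨a, ha⟩ := IsConvexCombination.exists_of_mem_convexHull hφ hxA
  obtain ⟨b, hb⟩ := IsConvexCombination.exists_of_mem_convexHull hφ hxB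
  exact ha.alternatesIn hv hAB hABU hU hb

theorem convexHull_inter_nonempty_of_alternatesIn (hd : 0 < d) (hv : StrictMono v)
    (hAB : Disjoint A B) (hABU : A ∪ B = U) (hU : U.card = d + 2) (h : AlternatesIn U A) :
    (convexHull ℝ (moment d ∘ v '' A) ∩ convexHull ℝ (moment d ∘ v '' B)).Nonempty := by
  set e := U.orderEmbOfFin rfl
  have hdep : ¬AffineIndependent ℝ ((moment d ∘ v) ∘ e) := fun hind => by
    have h₁ := hind.card_le_finrank_succ
    have h₂ := Submodule.finrank_le (vectorSpan ℝ (Set.range ((moment d ∘ v) ∘ e)))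
    simp only [Fintype.card_fin, Module.finrank_fin_fun] at h₁ h₂
    omega
  -- `d + 2` points of `ℝ^d` have a Radon partition; being alternating, it is `{A, B}`
  obtain ⟨S, x, hxS, hxSc⟩ := Convex.radon_partition hdep
  set A' : Finset α := (univ.filter (· ∈ S)).image e
  have hA'U : A' ⊆ U := fun s hs => by
    obtain ⟨i, -, rfl⟩ := mem_image.1 hs
    exact U.orderEmbOfFin_mem rfl i
  have hA' : (A' : Set α) = e '' S := by simp [A']
  have hB' : ((U \ A' : Finset α) : Set α) = e '' Sᶜ := by
    rw [coe_sdiff, hA', Set.image_compl_eq_range_sdiff_image e.injective, U.range_orderEmbOfFin]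
  rw [Set.image_comp (moment d ∘ v) e, ← hA'] at hxS
  rw [Set.image_comp (moment d ∘ v) e, ← hB'] at hxSc
  have h' := alternatesIn_of_mem_convexHull_inter hd hv disjoint_sdiff
    (union_sdiff_of_subset hA'U) hU hxS hxSc
  have hB : B = U \ A := hABU ▸ (union_sdiff_cancel_left hAB).symm
  rcases h.eq_or_eq_sdiff h' (hABU ▸ subset_union_left) hA'U with rfl | rfl
  · exact ⟨x, hxS, hB ▸ hxSc⟩
  · rw [Finset.sdiff_sdiff_eq_self hA'U] at hB
    exact ⟨x, hxSc, hB ▸ hxS⟩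

theorem convexHull_inter_nonempty_iff_alternates (hd : 0 < d) (hv : StrictMono v)
    (hAB : Disjoint A B) (hU : (A ∪ B).card = d + 2) (hcard : A.card = B.card) :
    (convexHull ℝ (moment d ∘ v '' A) ∩ convexHull ℝ (moment d ∘ v '' B)).Nonempty ↔
      Alternates A B := by
  rw [alternates_iff_alternatesIn hAB hcard]
  exact ⟨fun ⟨x, hxA, hxB⟩ => alternatesIn_of_mem_convexHull_inter hd hv hAB rfl hU hxA hxB,
    convexHull_inter_nonempty_of_alternatesIn hd hv hAB rfl hU⟩

theorem convexHull_inter_subsingleton (hd : 0 < d) (hv : StrictMono v) (hAB : Disjoint A B)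
    (hU : (A ∪ B).card = d + 2) :
    (convexHull ℝ (moment d ∘ v '' A) ∩
      convexHull ℝ (moment d ∘ v '' B)).Subsingleton := by
  rintro x ⟨hxA, hxB⟩ y ⟨hyA, hyB⟩
  have hφ := (moment_injective hd).comp hv.injective
  obtain ⟨a, ha⟩ := IsConvexCombination.exists_of_mem_convexHull hφ hxA
  obtain ⟨b, hb⟩ := IsConvexCombination.exists_of_mem_convexHull hφ hxB
  obtain ⟨a', ha'⟩ := IsConvexCombination.exists_of_mem_convexHull hφ hyA
  obtain ⟨b', hb'⟩ := IsConvexCombination.exists_of_mem_convexHull hφ hyB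
  exact ha.point_eq hv hAB rfl hU hb ha' hb'

theorem eq_of_mem_convexHull_inter {B' : Finset α} (hd : 0 < d) (hv : StrictMono v)
    (hAB : Disjoint A B) (hAB' : Disjoint A B') (hU : (A ∪ B).card = d + 2)
    (hU' : (A ∪ B').card = d + 2) (hBB' : (B ∪ B').card ≤ d + 1) {x : Fin d → ℝ}
    (hxA : x ∈ convexHull ℝ (moment d ∘ v '' A))
    (hxB : x ∈ convexHull ℝ (moment d ∘ v '' B))
    (hxB' : x ∈ convexHull ℝ (moment d ∘ v '' B')) : B = B' := by
  have hφ := (moment_injective hd).comp hv.injective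
  obtain ⟨a, ha⟩ := IsConvexCombination.exists_of_mem_convexHull hφ hxA
  obtain ⟨b, hb⟩ := IsConvexCombination.exists_of_mem_convexHull hφ hxB
  obtain ⟨b', hb'⟩ := IsConvexCombination.exists_of_mem_convexHull hφ hxB'
  exact (ha.subset_of_card_union_le hv hAB rfl hU hBB' hb hb').antisymm
    (ha.subset_of_card_union_le hv hAB' rfl hU' (by rwa [union_comm]) hb' hb)

theorem convexHull_inter_biUnion_finite_and_ncard (hd : 0 < d) (hv : StrictMono v)
    {A : Finset α} {𝒥 : Finset (Finset α)}
    (h𝒥 : ∀ J ∈ 𝒥, Disjoint A J ∧ (A ∪ J).card = d + 2 ∧ A.card = J.card)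
    (h𝒥𝒥 : ∀ J ∈ 𝒥, ∀ J' ∈ 𝒥, (J ∪ J').card ≤ d + 1) :
    (convexHull ℝ (moment d ∘ v '' A) ∩ ⋃ J ∈ 𝒥, convexHull ℝ (moment d ∘ v '' J)).Finite ∧
      (convexHull ℝ (moment d ∘ v '' A) ∩ ⋃ J ∈ 𝒥, convexHull ℝ (moment d ∘ v '' J)).ncard =
        #{J ∈ 𝒥 | Alternates A J} := by
  set H : Finset α → Set (Fin d → ℝ) := fun C => convexHull ℝ (moment d ∘ v '' C)
  have hsub : ∀ J ∈ 𝒥, (H A ∩ H J).Subsingleton := fun J hJ =>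
    convexHull_inter_subsingleton hd hv (h𝒥 J hJ).1 (h𝒥 J hJ).2.1
  have hdisj : (𝒥 : Set (Finset α)).PairwiseDisjoint fun J => H A ∩ H J :=
    fun J hJ J' hJ' hne => Set.disjoint_left.2 fun x hx hx' => hne <|
      eq_of_mem_convexHull_inter hd hv (h𝒥 J hJ).1 (h𝒥 J' hJ').1 (h𝒥 J hJ).2.1 (h𝒥 J' hJ').2.1
        (h𝒥𝒥 J hJ J' hJ') hx.1 hx.2 hx'.2
  have hcount : {J ∈ 𝒥 | (H A ∩ H J).Nonempty} = {J ∈ 𝒥 | Alternates A J} :=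
    filter_congr fun J hJ =>
      convexHull_inter_nonempty_iff_alternates hd hv (h𝒥 J hJ).1 (h𝒥 J hJ).2.1 (h𝒥 J hJ).2.2
  rw [Set.inter_iUnion₂, ← hcount]
  exact ⟨𝒥.finite_toSet.biUnion fun J hJ => (hsub J hJ).finite,
    Set.ncard_biUnion_of_subsingleton 𝒥 hsub hdisj⟩

end HullIntersection

theorem stmt15 (k : ℕ) (hk : 1 ≤ k) (I : Finset ℕ)
    (hI : I ⊆ Finset.Icc 1 (2 * k + 3)) (hIcard : I.card = k + 1) :
    (convexHull ℝ ((fun n : ℕ => moment (2 * k) (n : ℝ)) '' (I : Set ℕ)) ∩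
      ⋃ J ∈ (Finset.Icc 1 (2 * k + 3) \ I).powersetCard (k + 1),
        convexHull ℝ ((fun n : ℕ => moment (2 * k) (n : ℝ)) '' (J : Set ℕ))).Finite ∧
    (convexHull ℝ ((fun n : ℕ => moment (2 * k) (n : ℝ)) '' (I : Set ℕ)) ∩
      ⋃ J ∈ (Finset.Icc 1 (2 * k + 3) \ I).powersetCard (k + 1),
        convexHull ℝ ((fun n : ℕ => moment (2 * k) (n : ℝ)) '' (J : Set ℕ))).ncard =
      Set.ncard {J : Finset ℕ | J ⊆ Finset.Icc 1 (2 * k + 3) \ I ∧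
        J.card = k + 1 ∧ Alternates I J} := by
  set C := Finset.Icc 1 (2 * k + 3) \ I
  have hC : C.card = k + 2 := by rw [card_sdiff_of_subset hI, Nat.card_Icc, hIcard]; omega
  have hJ : ∀ J ∈ C.powersetCard (k + 1),
      Disjoint I J ∧ (I ∪ J).card = 2 * k + 2 ∧ I.card = J.card := fun J hJ => by
    obtain ⟨hJC, hJcard⟩ := mem_powersetCard.1 hJ
    have hIJ : Disjoint I J := disjoint_of_subset_right hJC disjoint_sdiff
    refine ⟨hIJ, ?_, hIcard.trans hJcard.symm⟩
    rw [card_union_of_disjoint hIJ, hIcard, hJcard]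
    ring
  have hJJ : ∀ J ∈ C.powersetCard (k + 1), ∀ J' ∈ C.powersetCard (k + 1),
      (J ∪ J').card ≤ 2 * k + 1 := fun J hJ J' hJ' =>
    (card_le_card (union_subset (mem_powersetCard.1 hJ).1 (mem_powersetCard.1 hJ').1)).trans
      (by omega)
  have hcount : {J : Finset ℕ | J ⊆ C ∧ J.card = k + 1 ∧ Alternates I J} =
      ↑{J ∈ C.powersetCard (k + 1) | Alternates I J} := by
    ext J
    simp [and_assoc]
  rw [hcount, Set.ncard_coe_finset]
  exact convexHull_inter_biUnion_finite_and_ncard (by omega) Nat.strictMono_cast hJ hJJ
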